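/- Let w be a valuation of K(X) extending v, and let w̄₁ and w̄₂ be two common extensions of w and v̄ to K̄(X). Then for every nonzero polynomial f ∈ K[X], max{ w̄₁(X−α) : α ∈ K̄, f(α)=0 } = max{ w̄₂(X−α) : α ∈ K̄, f(α)=0 }; that is, δ(f) does not depend on the choice of the common extension. -/

import Mathlib

/-!
Let `F` be the image of `f` in `K̄[X]`, let `α` be a root of `F` maximising `w̄(X - α)`, and
`δ = w̄(X - α)`. Compare `w̄` with the depth-zero valuation `μ = w_{α,δ}`, read off the Taylor
coefficients of a polynomial at `α`: `μ ≤ w̄` everywhere, with equality on every polynomial all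
of whose roots `β` satisfy `w̄(X - β) ≤ δ`, in particular on `F`. On Taylor coefficients one sees
`μ F ≤ μ (∂ₘ F) + m δ` for all Hasse derivatives `∂ₘ`, with equality at the last index `b ≥ 1`
where the weighted coefficients of `F` reach their minimum; and `∂_b F` has no root `β` with
`w̄(X - β) > δ`, since there its constant Taylor coefficient dominates. Hence
`δ = max_{b ≥ 1} (w̄ F - w̄ (∂_b F)) / b`, which only involves the values of `w` on `K[X]`.
-/

namespace MLV

open Polynomial

/-- An additive valuation on a commutative ring `R` with values in `Γ ∪ {∞}`
(written additively, with the `min` convention), thought of as the restriction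
to `R` of a valuation on its fraction field. -/
structure ValOn (R : Type*) [CommRing R] (Γ : Type*) [AddCommGroup Γ] [LinearOrder Γ] [IsOrderedAddMonoid Γ] where
  toFun : R → WithTop Γ
  map_zero' : toFun 0 = ⊤
  ne_top' : ∀ f : R, f ≠ 0 → toFun f ≠ ⊤
  map_mul' : ∀ f g : R, toFun (f * g) = toFun f + toFun g
  add_min' : ∀ f g : R, min (toFun f) (toFun g) ≤ toFun (f + g)

variable {K : Type*} [Field K] {Γ : Type*} [AddCommGroup Γ] [LinearOrder Γ] [IsOrderedAddMonoid Γ]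

/-- `w` (a valuation on `K(X)`, restricted to `K[X]`) extends the valuation `v` of `K`. -/
def Extends (w : ValOn (Polynomial K) Γ) (v : ValOn K Γ) : Prop :=
  ∀ c : K, w.toFun (C c) = v.toFun c

/-- `wbar` (a valuation on `K̄(X)`) is a common extension of `w` and of `vbar`. -/
def IsCommonExt {L : Type*} [Field L] [Algebra K L]
    (wbar : ValOn (Polynomial L) Γ) (w : ValOn (Polynomial K) Γ) (vbar : ValOn L Γ) : Prop :=
  (∀ f : Polynomial K, wbar.toFun (f.map (algebraMap K L)) = w.toFun f) ∧
  (∀ c : L, wbar.toFun (C c) = vbar.toFun c)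

/-- `δ(f) = max { w̄(X - α) : α ∈ K̄, f(α) = 0 }` (as an element of `WithBot (WithTop Γ)`,
the value `⊥` corresponding to a polynomial without roots). -/
noncomputable def delta {L : Type*} [Field L] [Algebra K L]
    (wbar : ValOn (Polynomial L) Γ) (f : Polynomial K) : WithBot (WithTop Γ) :=
  (((f.map (algebraMap K L)).roots).map
    fun α => ((wbar.toFun (X - C α) : WithTop Γ) : WithBot (WithTop Γ))).sup

/-- `Q` is an abstract key polynomial for `w` (with respect to the common extension `wbar`
computing `δ`): `Q` is monic and `δ(f) < δ(Q)` for every nonzero `f` with `deg f < deg Q`. -/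
def IsABKP {L : Type*} [Field L] [Algebra K L]
    (wbar : ValOn (Polynomial L) Γ) (Q : Polynomial K) : Prop :=
  Q.Monic ∧ ∀ f : Polynomial K, f ≠ 0 → f.degree < Q.degree → delta wbar f < delta wbar Q

/-- The `Q`-truncation `w_Q` of `w`: on the `Q`-expansion `f = ∑ fᵢ Qⁱ` it equals
`min_i w(fᵢ Qⁱ)`. -/
noncomputable def truncVal (w : ValOn (Polynomial K) Γ) (Q f : Polynomial K) : WithTop Γ :=
  (Finset.range (f.natDegree + 1)).inf fun i => w.toFun ((f /ₘ Q ^ i) %ₘ Q * Q ^ i)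

/-- `f ∼_u g` : `u(f - g) > u f = u g`. -/
def EquivMod (u : Polynomial K → WithTop Γ) (f g : Polynomial K) : Prop :=
  u f < u (f - g) ∧ u f = u g

/-- `f ∣_u g` : `g ∼_u f h` for some `h`. -/
def DvdMod (u : Polynomial K → WithTop Γ) (f g : Polynomial K) : Prop :=
  ∃ h : Polynomial K, EquivMod u g (f * h)

/-- A key polynomial for `u`: monic, `u`-irreducible and `u`-minimal. -/
def IsKeyPol (u : Polynomial K → WithTop Γ) (φ : Polynomial K) : Prop :=
  φ.Monic ∧
  (∀ h q : Polynomial K, DvdMod u φ (h * q) → DvdMod u φ h ∨ DvdMod u φ q) ∧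
  (∀ h : Polynomial K, h ≠ 0 → DvdMod u φ h → φ.degree ≤ h.degree)

/-- A key polynomial for `u` of minimal degree (i.e. of degree `deg(u)`). -/
def IsMinKeyPol (u : Polynomial K → WithTop Γ) (φ : Polynomial K) : Prop :=
  IsKeyPol u φ ∧ ∀ ψ : Polynomial K, IsKeyPol u ψ → φ.degree ≤ ψ.degree

/-- `u ≤ u'` pointwise on `K[X]`. -/
def FnLe (u u' : Polynomial K → WithTop Γ) : Prop :=
  ∀ f : Polynomial K, u f ≤ u' f

/-- `u < u'` : `u ≤ u'` and `u f < u' f` for some `f`. -/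
def FnLt (u u' : Polynomial K → WithTop Γ) : Prop :=
  FnLe u u' ∧ ∃ f : Polynomial K, u f < u' f

/-- `g ∈ Φ(u, u')` : `g` is monic of minimal degree with `u g < u' g`. -/
def InPhi (u u' : Polynomial K → WithTop Γ) (g : Polynomial K) : Prop :=
  g.Monic ∧ u g < u' g ∧
  ∀ h : Polynomial K, h.Monic → u h < u' h → g.degree ≤ h.degree

/-- The value at `f` of the augmented valuation `[u; φ, γ]`, computed via the
`φ`-expansion `f = ∑ fᵢ φⁱ` as `min_i (u fᵢ + i γ)`. -/
noncomputable def augVal (u : Polynomial K → WithTop Γ) (φ : Polynomial K) (γ : Γ)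
    (f : Polynomial K) : WithTop Γ :=
  (Finset.range (f.natDegree + 1)).inf
    fun i => u ((f /ₘ φ ^ i) %ₘ φ) + i • ((γ : WithTop Γ))

/-- `u' = [u; φ, γ]` is the ordinary augmentation of `u` at the key polynomial `φ`
with value `γ > u φ`. -/
def IsOrdAug (u : Polynomial K → WithTop Γ) (φ : Polynomial K) (γ : Γ)
    (u' : Polynomial K → WithTop Γ) : Prop :=
  IsKeyPol u φ ∧ u φ < (γ : WithTop Γ) ∧ ∀ f : Polynomial K, u' f = augVal u φ γ f

/-- A continuous family of augmentations `(ρ_i = [w'; χ_i, γ_i])_{i ∈ ι}` of `w'`. -/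
structure ContFamily (w' : ValOn (Polynomial K) Γ) (ι : Type*) [LinearOrder ι] where
  chi : ι → Polynomial K
  gam : ι → Γ
  rho : ι → ValOn (Polynomial K) Γ
  no_last : ∀ i : ι, ∃ j : ι, i < j
  gam_mono : StrictMono gam
  aug : ∀ i : ι, IsOrdAug w'.toFun (chi i) (gam i) (rho i).toFun
  deg_eq : ∀ i j : ι, (chi i).degree = (chi j).degree
  key_step : ∀ i j : ι, i < j → IsKeyPol (rho i).toFun (chi j)
  not_equiv : ∀ i j : ι, i < j → ¬ EquivMod (rho i).toFun (chi j) (chi i)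
  step : ∀ i j : ι, i < j → IsOrdAug (rho i).toFun (chi j) (gam j) (rho j).toFun

/-- `f` is `W`-stable with stable value `c`. -/
def StableAt {w' : ValOn (Polynomial K) Γ} {ι : Type*} [LinearOrder ι]
    (F : ContFamily w' ι) (f : Polynomial K) (c : WithTop Γ) : Prop :=
  ∃ i0 : ι, ∀ i : ι, i0 ≤ i → (F.rho i).toFun f = c

/-- `f` is `W`-stable. -/
def IsStable {w' : ValOn (Polynomial K) Γ} {ι : Type*} [LinearOrder ι]
    (F : ContFamily w' ι) (f : Polynomial K) : Prop :=
  ∃ c : WithTop Γ, StableAt F f c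

/-- The valuation `w` is the stable limit of the family `F`. -/
def IsStableLimit {w' : ValOn (Polynomial K) Γ} {ι : Type*} [LinearOrder ι]
    (F : ContFamily w' ι) (w : ValOn (Polynomial K) Γ) : Prop :=
  ∀ f : Polynomial K, StableAt F f (w.toFun f)

/-- `Q` is a MacLane–Vaquié limit key polynomial for `F`: monic, `F`-unstable,
of minimal degree among unstable polynomials. -/
def IsLimitKP {w' : ValOn (Polynomial K) Γ} {ι : Type*} [LinearOrder ι]
    (F : ContFamily w' ι) (Q : Polynomial K) : Prop :=
  Q.Monic ∧ ¬ IsStable F Q ∧ ∀ g : Polynomial K, ¬ IsStable F g → Q.degree ≤ g.degree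

/-- The continuous family `F` is essential: `deg(W) < m_∞ < ∞`. -/
def IsEssential {w' : ValOn (Polynomial K) Γ} {ι : Type*} [LinearOrder ι]
    (F : ContFamily w' ι) : Prop :=
  (∃ f : Polynomial K, ¬ IsStable F f) ∧
  ∀ (i : ι) (f : Polynomial K), ¬ IsStable F f → (F.chi i).degree < f.degree

/-- `w = [F; Q, γ]` is the limit augmentation of the family `F` at the limit key
polynomial `Q` with value `γ`: on `Q`-expansions, `w f = min_i (ρ_W(fᵢ) + iγ)`, which
since the coefficients are stable is the eventual value of `[ρ_i; Q, γ]` on `f`. -/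
def IsLimitAug {w' : ValOn (Polynomial K) Γ} {ι : Type*} [LinearOrder ι]
    (F : ContFamily w' ι) (Q : Polynomial K) (γ : Γ)
    (w : ValOn (Polynomial K) Γ) : Prop :=
  IsLimitKP F Q ∧ (∀ i : ι, (F.rho i).toFun Q < (γ : WithTop Γ)) ∧
  ∀ f : Polynomial K, ∃ i0 : ι, ∀ i : ι, i0 ≤ i → w.toFun f = augVal (F.rho i).toFun Q γ f

/-- `w` is a depth-zero valuation `w_{α,δ}` over `v`. -/
def IsDepthZero (v : ValOn K Γ) (w : ValOn (Polynomial K) Γ) : Prop :=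
  ∃ (α : K) (d : Γ), ∀ f : Polynomial K,
    w.toFun f = (Finset.range (f.natDegree + 1)).inf
      fun i => v.toFun (((Polynomial.taylor α) f).coeff i) + i • ((d : WithTop Γ))

/-- An ordinary augmentation step of a MacLane–Vaquié chain:
`u' = [u; φ, γ]` with `deg(u) < deg Φ(u, u')`. -/
def OrdMLVStep (u u' : Polynomial K → WithTop Γ) (φ : Polynomial K) (γ : Γ) : Prop :=
  IsOrdAug u φ γ u' ∧
  ∀ ψ g : Polynomial K, IsMinKeyPol u ψ → InPhi u u' g → ψ.degree < g.degree

/-- A limit augmentation step of a MacLane–Vaquié chain, with the underlying essential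
continuous family `F` made explicit: `w = [F; φ, γ]`, `deg(w') = deg Φ(w', w)` and
`φprev ∉ Φ(w', w)`. -/
def LimMLVStepWith {w' : ValOn (Polynomial K) Γ} {ι : Type*} [LinearOrder ι]
    (F : ContFamily w' ι) (w : ValOn (Polynomial K) Γ)
    (φprev φ : Polynomial K) (γ : Γ) : Prop :=
  IsEssential F ∧ IsLimitAug F φ γ w ∧
  (∀ ψ g : Polynomial K, IsMinKeyPol w'.toFun ψ → InPhi w'.toFun w.toFun g →
    ψ.degree = g.degree) ∧
  ¬ InPhi w'.toFun w.toFun φprev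

/-- A limit augmentation step of a MacLane–Vaquié chain (the underlying essential
continuous family being existentially quantified). -/
def LimMLVStep (w' w : ValOn (Polynomial K) Γ) (φprev φ : Polynomial K) (γ : Γ) : Prop :=
  ∃ (ι : Type) (li : LinearOrder ι) (F : @ContFamily K _ Γ _ _ _ w' ι li),
    @LimMLVStepWith K _ Γ _ _ _ w' ι li F w φprev φ γ

/-- Membership in the index set `I`: `I = ℕ` if `o = none`, and `I = {0, …, N}`
if `o = some N`. -/
def InIdx (o : Option ℕ) (j : ℕ) : Prop :=
  ∀ N : ℕ, o = some N → j ≤ N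

/-- An induced complete sequence `{Q_i}_{i ∈ Δ}` of abstract key polynomials for `w`:
a complete sequence of ABKPs, organized in blocks `Δ_j = {j} ∪ ϑ_j` (for `j` in
`I = {0,…,N}` or `I = ℕ`), satisfying the properties of Remark 1.3.  Here `blk i`
is the block of an index `i ∈ Δ`, `main j ∈ Δ` is the distinguished first element
of the block `Δ_j`, and `ϑ_j = {i ∈ Δ | blk i = j, i ≠ main j}`. -/
structure ICS {L : Type*} [Field L] [Algebra K L]
    (wbar : ValOn (Polynomial L) Γ) (w : ValOn (Polynomial K) Γ)
    (Δ : Type*) [LinearOrder Δ] where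
  Q : Δ → Polynomial K
  abkp : ∀ i : Δ, IsABKP wbar (Q i)
  wf : WellFoundedLT Δ
  delta_mono : ∀ i i' : Δ, i < i' → delta wbar (Q i) < delta wbar (Q i')
  wval_mono : ∀ i i' : Δ, i < i' → w.toFun (Q i) < w.toFun (Q i')
  complete : ∀ f : Polynomial K, f ≠ 0 →
    ∃ i : Δ, (Q i).degree ≤ f.degree ∧ truncVal w (Q i) f = w.toFun f
  Ifin : Option ℕ
  blk : Δ → ℕ
  main : ℕ → Δ
  blk_mono : ∀ i i' : Δ, i ≤ i' → blk i ≤ blk i'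
  blk_mem : ∀ i : Δ, InIdx Ifin (blk i)
  blk_main : ∀ j : ℕ, InIdx Ifin j → blk (main j) = j
  main_min : ∀ (j : ℕ) (i : Δ), blk i = j → main j ≤ i
  theta_no_last : ∀ i : Δ, i ≠ main (blk i) →
    ∃ i' : Δ, blk i' = blk i ∧ i' ≠ main (blk i) ∧ i < i'
  deg_blk_eq : ∀ i i' : Δ, blk i = blk i' → (Q i).degree = (Q i').degree
  deg_blk_lt : ∀ i i' : Δ, blk i < blk i' → (Q i).degree < (Q i').degree
  degQ0 : (Q (main 0)).degree = 1

open Polynomial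

namespace ValOn

variable {R : Type*} [CommRing R] [Nontrivial R]

theorem toFun_one (u : ValOn R Γ) : u.toFun 1 = 0 := by
  have h := u.map_mul' 1 1
  rw [mul_one] at h
  lift u.toFun 1 to Γ using u.ne_top' 1 one_ne_zero with a
  exact_mod_cast left_eq_add.mp (by exact_mod_cast h : a = a + a)

def toAddValuation (u : ValOn R Γ) : AddValuation R (WithTop Γ) :=
  AddValuation.of u.toFun u.map_zero' u.toFun_one u.add_min' u.map_mul'

@[simp]
theorem toAddValuation_apply (u : ValOn R Γ) (x : R) : u.toAddValuation x = u.toFun x := rfl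

end ValOn

namespace AddValuation

variable {R : Type*} [CommRing R] (v : AddValuation R (WithTop Γ))

theorem le_map_sum_add {ι : Type*} {s : Finset ι} {f : ι → R} {γ e : WithTop Γ}
    (h : ∀ i ∈ s, γ ≤ v (f i) + e) : γ ≤ v (∑ i ∈ s, f i) + e := by
  rcases s.eq_empty_or_nonempty with rfl | hs
  · simp
  obtain ⟨i, hi, hmin⟩ := s.exists_min_image (fun i => v (f i)) hs
  exact (h i hi).trans (add_le_add_left (v.map_le_sum hmin) e)

theorem lt_map_sum_add {ι : Type*} {s : Finset ι} {f : ι → R} {γ e : WithTop Γ} (hγ : γ ≠ ⊤)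
    (h : ∀ i ∈ s, γ < v (f i) + e) : γ < v (∑ i ∈ s, f i) + e := by
  rcases s.eq_empty_or_nonempty with rfl | hs
  · simpa using hγ.lt_top
  obtain ⟨i, hi, hmin⟩ := s.exists_min_image (fun i => v (f i)) hs
  exact (h i hi).trans_le (add_le_add_left (v.map_le_sum hmin) e)

theorem le_map_nsmul (n : ℕ) (x : R) : v x ≤ v (n • x) := by
  rw [← Finset.card_range n, ← Finset.sum_const]
  exact v.map_le_sum fun _ _ => le_rfl

theorem map_eval_eq_coeff_zero {p : R[X]} {t : R} {d : WithTop Γ} (hd : d ≤ v t)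
    (h : ∀ i, 1 ≤ i → v (p.coeff 0) < v (p.coeff i) + i • d) :
    v (p.eval t) = v (p.coeff 0) := by
  have hfin : v (p.coeff 0) ≠ ⊤ := (h 1 le_rfl).ne_top
  rw [eval_eq_sum_range, Finset.sum_range_succ', pow_zero, mul_one]
  refine v.map_add_eq_of_lt_right (v.map_lt_sum hfin fun i _ => ?_)
  rw [v.map_mul, v.map_pow]
  exact (h (i + 1) (Nat.le_add_left 1 i)).trans_le (by gcongr)

end AddValuation

theorem hasseDeriv_map {R S : Type*} [Semiring R] [Semiring S] (φ : R →+* S) (k : ℕ) (f : R[X]) :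
    hasseDeriv k (f.map φ) = (hasseDeriv k f).map φ := by
  ext n
  simp [hasseDeriv_coeff, coeff_map]

theorem taylor_hasseDeriv_coeff {R : Type*} [CommSemiring R] (α : R) (F : R[X]) (m i : ℕ) :
    (taylor α (hasseDeriv m F)).coeff i = (i + m).choose i • (taylor α F).coeff (i + m) := by
  rw [taylor_coeff, taylor_coeff, ← LinearMap.comp_apply, hasseDeriv_comp, LinearMap.smul_apply,
    eval_smul]

section Gauss

open Finset.HasAntidiagonal

variable {L : Type*} [Field L] (v : AddValuation L (WithTop Γ)) (δ : Γ)

def weightedCoeff (p : L[X]) (i : ℕ) : WithTop Γ := v (p.coeff i) + i • (δ : WithTop Γ)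

noncomputable def gaussFun (p : L[X]) : WithTop Γ := p.support.inf (weightedCoeff v δ p)

variable {v δ}

theorem gaussFun_le (p : L[X]) (i : ℕ) : gaussFun v δ p ≤ weightedCoeff v δ p i := by
  by_cases hi : i ∈ p.support
  · exact Finset.inf_le hi
  · simp [weightedCoeff, notMem_support_iff.mp hi]

theorem le_gaussFun_iff {p : L[X]} {γ : WithTop Γ} :
    γ ≤ gaussFun v δ p ↔ ∀ i, γ ≤ weightedCoeff v δ p i :=
  ⟨fun h i => h.trans (gaussFun_le p i), fun h => Finset.le_inf fun i _ => h i⟩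

theorem weightedCoeff_ne_top {p : L[X]} {i : ℕ} (hi : p.coeff i ≠ 0) :
    weightedCoeff v δ p i ≠ ⊤ :=
  WithTop.add_ne_top.mpr ⟨v.ne_top_iff.mpr hi, by simp [← WithTop.coe_nsmul]⟩

theorem gaussFun_ne_top {p : L[X]} (hp : p ≠ 0) : gaussFun v δ p ≠ ⊤ := by
  obtain ⟨i, hi⟩ := support_nonempty.mpr hp
  exact ne_top_of_le_ne_top (weightedCoeff_ne_top (mem_support_iff.mp hi)) (gaussFun_le p i)

theorem exists_last_weightedCoeff_eq_gaussFun {p : L[X]} (hp : p ≠ 0) :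
    ∃ b, weightedCoeff v δ p b = gaussFun v δ p ∧
      ∀ i, b < i → gaussFun v δ p < weightedCoeff v δ p i := by
  classical
  obtain ⟨i₀, hi₀, h₀⟩ :=
    Finset.exists_mem_eq_inf p.support (support_nonempty.mpr hp) (weightedCoeff v δ p)
  set S := p.support.filter fun i => weightedCoeff v δ p i = gaussFun v δ p
  have hS : S.Nonempty := ⟨i₀, Finset.mem_filter.mpr ⟨hi₀, h₀.symm⟩⟩
  refine ⟨S.max' hS, (Finset.mem_filter.mp (S.max'_mem hS)).2,
    fun i hi => (gaussFun_le p i).lt_of_ne fun h => hi.not_ge (S.le_max' i ?_)⟩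
  have hpi : p.coeff i ≠ 0 := fun h0 =>
    gaussFun_ne_top (v := v) (δ := δ) hp (by simp [h, weightedCoeff, h0])
  exact Finset.mem_filter.mpr ⟨mem_support_iff.mpr hpi, h.symm⟩

theorem map_coeff_mul_coeff_add_nsmul (p q : L[X]) {k : ℕ} {x : ℕ × ℕ}
    (hx : x ∈ antidiagonal k) :
    v (p.coeff x.1 * q.coeff x.2) + k • (δ : WithTop Γ) =
      weightedCoeff v δ p x.1 + weightedCoeff v δ q x.2 := by
  rw [← mem_antidiagonal.mp hx, v.map_mul, add_nsmul, weightedCoeff, weightedCoeff]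
  abel

theorem le_gaussFun_add {p : L[X]} {γ e : WithTop Γ} (h : ∀ i, γ ≤ weightedCoeff v δ p i + e) :
    γ ≤ gaussFun v δ p + e := by
  rcases eq_or_ne p 0 with rfl | hp
  · simp [gaussFun]
  obtain ⟨b, hb, -⟩ := exists_last_weightedCoeff_eq_gaussFun (v := v) (δ := δ) hp
  exact hb ▸ h b

theorem gaussFun_mul (p q : L[X]) : gaussFun v δ (p * q) = gaussFun v δ p + gaussFun v δ q := by
  rcases eq_or_ne p 0 with rfl | hp
  · simp [gaussFun]
  rcases eq_or_ne q 0 with rfl | hq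
  · simp [gaussFun]
  obtain ⟨b, hb, hb'⟩ := exists_last_weightedCoeff_eq_gaussFun (v := v) (δ := δ) hp
  obtain ⟨c, hc, hc'⟩ := exists_last_weightedCoeff_eq_gaussFun (v := v) (δ := δ) hq
  have hbc : (b, c) ∈ antidiagonal (b + c) := mem_antidiagonal.mpr rfl
  refine le_antisymm ((gaussFun_le _ (b + c)).trans_eq ?_) (le_gaussFun_iff.mpr fun k => ?_)
  · -- the term `(b, c)` is the unique one of minimal weighted value in the coefficient `b + c`
    have hrest : gaussFun v δ p + gaussFun v δ q <
        v (∑ x ∈ (antidiagonal (b + c)).erase (b, c), p.coeff x.1 * q.coeff x.2) +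
          (b + c) • (δ : WithTop Γ) := by
      refine AddValuation.lt_map_sum_add v
        (WithTop.add_ne_top.mpr ⟨gaussFun_ne_top hp, gaussFun_ne_top hq⟩) fun x hx => ?_
      obtain ⟨hne, hx⟩ := Finset.mem_erase.mp hx
      rw [map_coeff_mul_coeff_add_nsmul p q hx]
      have hsum := mem_antidiagonal.mp hx
      rcases lt_or_ge b x.1 with h | h
      · exact WithTop.add_lt_add_of_lt_of_le (gaussFun_ne_top hq) (hb' _ h) (gaussFun_le q _)
      · refine WithTop.add_lt_add_of_le_of_lt (gaussFun_ne_top hp) (gaussFun_le p _) (hc' _ ?_)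
        by_contra! h'
        exact hne (Prod.ext (by omega) (by omega))
    have hterm := map_coeff_mul_coeff_add_nsmul (v := v) (δ := δ) p q hbc
    rw [hb, hc] at hterm
    rw [weightedCoeff, coeff_mul, ← Finset.add_sum_erase _ _ hbc, v.map_add_eq_of_lt_left, hterm]
    rw [← WithTop.add_lt_add_iff_right (WithTop.coe_nsmul δ (b + c) ▸ WithTop.coe_ne_top), hterm]
    exact hrest
  · rw [weightedCoeff, coeff_mul]
    refine AddValuation.le_map_sum_add v fun x hx => ?_
    rw [map_coeff_mul_coeff_add_nsmul p q hx]
    exact add_le_add (gaussFun_le p x.1) (gaussFun_le q x.2)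

theorem gaussFun_add (p q : L[X]) :
    min (gaussFun v δ p) (gaussFun v δ q) ≤ gaussFun v δ (p + q) :=
  le_gaussFun_iff.mpr fun i =>
    calc min (gaussFun v δ p) (gaussFun v δ q)
        ≤ min (weightedCoeff v δ p i) (weightedCoeff v δ q i) :=
          min_le_min (gaussFun_le p i) (gaussFun_le q i)
      _ = min (v (p.coeff i)) (v (q.coeff i)) + i • (δ : WithTop Γ) := min_add_add_right _ _ _
      _ ≤ weightedCoeff v δ (p + q) i := by
          rw [weightedCoeff, coeff_add]
          gcongr
          exact v.map_add _ _

theorem gaussFun_C (c : L) : gaussFun v δ (C c) = v c := by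
  rcases eq_or_ne c 0 with rfl | hc
  · simp [gaussFun]
  · simp [gaussFun, support_C hc, weightedCoeff]

theorem gaussFun_X : gaussFun v δ X = δ := by
  simp [gaussFun, weightedCoeff]

variable (v δ)

noncomputable def gaussVal : AddValuation L[X] (WithTop Γ) :=
  AddValuation.of (gaussFun v δ) (by simp [gaussFun])
    (by simpa using gaussFun_C (v := v) (δ := δ) 1) gaussFun_add gaussFun_mul

/-- The depth-zero valuation `w_{α,δ}`: `∑ aᵢ (X - α)ⁱ ↦ min (v aᵢ + i δ)`. -/
noncomputable def depthZeroVal (α : L) : AddValuation L[X] (WithTop Γ) :=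
  (gaussVal v δ).comap (taylorAlgHom α).toRingHom

variable {v δ}

theorem depthZeroVal_apply (α : L) (g : L[X]) :
    depthZeroVal v δ α g = gaussFun v δ (taylor α g) := rfl

theorem depthZeroVal_C (α c : L) : depthZeroVal v δ α (C c) = v c := by
  rw [depthZeroVal_apply, taylor_C, gaussFun_C]

theorem depthZeroVal_X_sub_C_self (α : L) : depthZeroVal v δ α (X - C α) = δ := by
  rw [depthZeroVal_apply, map_sub, taylor_X, taylor_C, add_sub_cancel_right, gaussFun_X]

theorem depthZeroVal_le_hasseDeriv_add_nsmul {α : L} (F : L[X]) (m : ℕ) :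
    depthZeroVal v δ α F ≤ depthZeroVal v δ α (hasseDeriv m F) + m • (δ : WithTop Γ) := by
  rw [depthZeroVal_apply, depthZeroVal_apply]
  refine le_gaussFun_add fun i => (gaussFun_le _ (i + m)).trans ?_
  rw [weightedCoeff, weightedCoeff, taylor_hasseDeriv_coeff, add_nsmul, ← add_assoc]
  gcongr
  exact AddValuation.le_map_nsmul v _ _

theorem depthZeroVal_hasseDeriv_add_nsmul_eq {α : L} {F : L[X]} {b : ℕ}
    (hb : weightedCoeff v δ (taylor α F) b = depthZeroVal v δ α F) :
    depthZeroVal v δ α (hasseDeriv b F) + b • (δ : WithTop Γ) = depthZeroVal v δ α F := by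
  refine le_antisymm ?_ (depthZeroVal_le_hasseDeriv_add_nsmul F b)
  rw [← hb, weightedCoeff]
  gcongr
  have h := gaussFun_le (v := v) (δ := δ) (taylor α (hasseDeriv b F)) 0
  rwa [weightedCoeff, taylor_hasseDeriv_coeff, zero_add, Nat.choose_zero_right, one_smul,
    zero_smul, add_zero] at h

end Gauss

section DepthZero

variable {L : Type*} [Field L] (W : AddValuation L[X] (WithTop Γ)) {α : L} {δ : Γ}

theorem depthZeroVal_le (hδ : W (X - C α) = δ) (g : L[X]) :
    depthZeroVal (W.comap C) δ α g ≤ W g := by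
  conv_rhs => rw [← sum_taylor_eq g α]
  rw [depthZeroVal_apply, Polynomial.sum_def]
  refine W.map_le_sum fun i _ => ?_
  rw [W.map_mul, W.map_pow, hδ]
  exact gaussFun_le _ i

theorem map_X_sub_C_le_depthZeroVal (hδ : W (X - C α) = δ) {β : L} (hβ : W (X - C β) ≤ δ) :
    W (X - C β) ≤ depthZeroVal (W.comap C) δ α (X - C β) := by
  have hβα : W (X - C β) ≤ W (C (α - β)) := by
    rw [show C (α - β) = (X - C β) - (X - C α) by rw [map_sub]; ring]
    exact W.map_le_sub le_rfl (hδ ▸ hβ)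
  set μ := depthZeroVal (W.comap C) δ α
  calc W (X - C β) ≤ min (δ : WithTop Γ) (W (C (α - β))) := le_min hβ hβα
    _ = min (μ (X - C α)) (μ (C (α - β))) := by
        rw [depthZeroVal_X_sub_C_self, depthZeroVal_C]
        rfl
    _ ≤ μ (X - C α + C (α - β)) := AddValuation.map_add _ _ _
    _ = μ (X - C β) := by rw [map_sub]; ring_nf

theorem map_eq_depthZeroVal [IsAlgClosed L] (hδ : W (X - C α) = δ) {g : L[X]}
    (hg : ∀ β ∈ g.roots, W (X - C β) ≤ δ) : W g = depthZeroVal (W.comap C) δ α g := by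
  refine le_antisymm ?_ (depthZeroVal_le W hδ g)
  rw [(IsAlgClosed.splits g).eq_prod_roots, W.map_mul, AddValuation.map_mul, depthZeroVal_C]
  refine add_le_add le_rfl (Multiset.prod_induction (fun q => W q ≤ depthZeroVal (W.comap C) δ α q)
    _ (fun a b ha hb => ?_) (by simp) fun q hq => ?_)
  · rw [W.map_mul, AddValuation.map_mul]
    exact add_le_add ha hb
  · obtain ⟨β, hβ, rfl⟩ := Multiset.mem_map.mp hq
    exact map_X_sub_C_le_depthZeroVal W hδ (hg β hβ)

theorem map_X_sub_C_le_of_isRoot_hasseDeriv (hδ : W (X - C α) = δ) {F : L[X]} (hF : F ≠ 0)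
    {b : ℕ} (hb : weightedCoeff (W.comap C) δ (taylor α F) b = depthZeroVal (W.comap C) δ α F)
    (hb' : ∀ i, b < i →
      depthZeroVal (W.comap C) δ α F < weightedCoeff (W.comap C) δ (taylor α F) i)
    {β : L} (hβ : (hasseDeriv b F).IsRoot β) : W (X - C β) ≤ δ := by
  by_contra! hlt
  have hβα : (δ : WithTop Γ) ≤ W.comap C (β - α) := by
    show _ ≤ W (C (β - α))
    rw [show C (β - α) = (X - C α) - (X - C β) by rw [map_sub]; ring]
    exact W.map_le_sub hδ.ge hlt.le
  have hfin : weightedCoeff (W.comap C) δ (taylor α F) b ≠ ⊤ :=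
    hb ▸ gaussFun_ne_top (by simpa using hF)
  -- as `v (β - α) ≥ δ`, the constant Taylor coefficient of `∂_b F` at `α` dominates `(∂_b F)(β)`
  have heval := AddValuation.map_eval_eq_coeff_zero (W.comap C) hβα
    (p := taylor α (hasseDeriv b F)) fun i hi => ?_
  · rw [taylor_eval, sub_add_cancel, hβ.eq_zero, AddValuation.map_zero, taylor_hasseDeriv_coeff,
      zero_add, Nat.choose_zero_right, one_smul] at heval
    exact hfin (by rw [weightedCoeff, ← heval, top_add])
  · rw [taylor_hasseDeriv_coeff, taylor_hasseDeriv_coeff, zero_add, Nat.choose_zero_right, one_smul]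
    have h := hb' (i + b) (by omega)
    rw [← hb, weightedCoeff, weightedCoeff, add_nsmul, ← add_assoc,
      WithTop.add_lt_add_iff_right (by simp [← WithTop.coe_nsmul])] at h
    exact h.trans_le (by gcongr; exact AddValuation.le_map_nsmul _ _ _)

variable [IsAlgClosed L] {F : L[X]}

theorem le_map_hasseDeriv_add_nsmul (hδ : W (X - C α) = δ)
    (hmax : ∀ β ∈ F.roots, W (X - C β) ≤ δ) (m : ℕ) :
    W F ≤ W (hasseDeriv m F) + m • (δ : WithTop Γ) := by
  rw [map_eq_depthZeroVal W hδ hmax]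
  exact (depthZeroVal_le_hasseDeriv_add_nsmul F m).trans (by gcongr; exact depthZeroVal_le W hδ _)

theorem exists_map_hasseDeriv_add_nsmul_eq (hδ : W (X - C α) = δ) (hα : α ∈ F.roots)
    (hmax : ∀ β ∈ F.roots, W (X - C β) ≤ δ) :
    ∃ b ≠ 0, W (hasseDeriv b F) + b • (δ : WithTop Γ) = W F := by
  have hF : F ≠ 0 := ne_zero_of_mem_roots hα
  have hT : taylor α F ≠ 0 := by simpa using hF
  obtain ⟨b, hb, hb'⟩ := exists_last_weightedCoeff_eq_gaussFun (v := W.comap C) (δ := δ) hT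
  refine ⟨b, ?_, ?_⟩
  · rintro rfl
    refine gaussFun_ne_top (v := W.comap C) (δ := δ) hT ?_
    rw [← hb, weightedCoeff, taylor_coeff_zero, ((mem_roots hF).mp hα).eq_zero,
      AddValuation.map_zero, top_add]
  · rw [map_eq_depthZeroVal W hδ hmax, map_eq_depthZeroVal W hδ fun β hβ =>
      map_X_sub_C_le_of_isRoot_hasseDeriv W hδ hF hb hb' (isRoot_of_mem_roots hβ)]
    exact depthZeroVal_hasseDeriv_add_nsmul_eq hb

end DepthZero

theorem le_of_add_nsmul_eq_of_le_add_nsmul {A B : WithTop Γ} {δ₁ δ₂ : Γ} {b : ℕ} (hb : b ≠ 0)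
    (hA : A ≠ ⊤) (h₁ : B + b • (δ₁ : WithTop Γ) = A) (h₂ : A ≤ B + b • (δ₂ : WithTop Γ)) :
    δ₁ ≤ δ₂ := by
  have hB : B ≠ ⊤ := fun h => hA (by rw [← h₁, h, top_add])
  rw [← h₁, WithTop.add_le_add_iff_left hB, ← WithTop.coe_nsmul, ← WithTop.coe_nsmul,
    WithTop.coe_le_coe] at h₂
  exact le_of_nsmul_le_nsmul_right hb h₂

theorem eq_of_map_hasseDeriv_eq {L : Type*} [Field L] [IsAlgClosed L]
    {W₁ W₂ : AddValuation L[X] (WithTop Γ)} {F : L[X]} {α₁ α₂ : L} {δ₁ δ₂ : Γ}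
    (hF : ∀ m, W₁ (hasseDeriv m F) = W₂ (hasseDeriv m F)) (hF₀ : W₁ F ≠ ⊤)
    (hδ₁ : W₁ (X - C α₁) = δ₁) (hα₁ : α₁ ∈ F.roots) (hmax₁ : ∀ β ∈ F.roots, W₁ (X - C β) ≤ δ₁)
    (hδ₂ : W₂ (X - C α₂) = δ₂) (hα₂ : α₂ ∈ F.roots) (hmax₂ : ∀ β ∈ F.roots, W₂ (X - C β) ≤ δ₂) :
    δ₁ = δ₂ := by
  have hW : W₁ F = W₂ F := by simpa only [hasseDeriv_zero'] using hF 0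
  obtain ⟨b₁, hb₁, h₁⟩ := exists_map_hasseDeriv_add_nsmul_eq W₁ hδ₁ hα₁ hmax₁
  obtain ⟨b₂, hb₂, h₂⟩ := exists_map_hasseDeriv_add_nsmul_eq W₂ hδ₂ hα₂ hmax₂
  refine le_antisymm (le_of_add_nsmul_eq_of_le_add_nsmul hb₁ hF₀ h₁ ?_)
    (le_of_add_nsmul_eq_of_le_add_nsmul hb₂ (hW ▸ hF₀) h₂ ?_)
  · rw [hW, hF]
    exact le_map_hasseDeriv_add_nsmul W₂ hδ₂ hmax₂ b₁
  · rw [← hW, ← hF]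
    exact le_map_hasseDeriv_add_nsmul W₁ hδ₁ hmax₁ b₂

theorem delta_eq_of_forall_le {L : Type*} [Field L] [Algebra K L] {wbar : ValOn L[X] Γ}
    {f : K[X]} {α : L} (hα : α ∈ (f.map (algebraMap K L)).roots)
    (hmax : ∀ β ∈ (f.map (algebraMap K L)).roots, wbar.toFun (X - C β) ≤ wbar.toFun (X - C α)) :
    delta wbar f = wbar.toFun (X - C α) :=
  le_antisymm (Multiset.sup_le.mpr fun _ hx => by
      obtain ⟨β, hβ, rfl⟩ := Multiset.mem_map.mp hx
      exact WithBot.coe_le_coe.mpr (hmax β hβ))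
    (Multiset.le_sup (Multiset.mem_map_of_mem _ hα))

theorem delta_independent_of_common_extension_general
    {K : Type*} [Field K] {Γ : Type*} [AddCommGroup Γ] [LinearOrder Γ] [IsOrderedAddMonoid Γ]
    {L : Type*} [Field L] [Algebra K L] [IsAlgClosure K L]
    (vbar : ValOn L Γ)
    (w : ValOn (Polynomial K) Γ)
    (wbar₁ wbar₂ : ValOn (Polynomial L) Γ)
    (h₁ : IsCommonExt wbar₁ w vbar) (h₂ : IsCommonExt wbar₂ w vbar)
    (f : Polynomial K) :
    delta wbar₁ f = delta wbar₂ f := by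
  have : IsAlgClosed L := IsAlgClosure.isAlgClosed K
  set F := f.map (algebraMap K L)
  rcases eq_or_ne F.roots 0 with hF | hF
  · simp [delta, F, hF]
  obtain ⟨α₁, hα₁, hmax₁⟩ := Multiset.exists_max_image (fun β => wbar₁.toFun (X - C β)) hF
  obtain ⟨α₂, hα₂, hmax₂⟩ := Multiset.exists_max_image (fun β => wbar₂.toFun (X - C β)) hF
  obtain ⟨δ₁, hδ₁⟩ := WithTop.ne_top_iff_exists.mp (wbar₁.ne_top' _ (X_sub_C_ne_zero α₁))
  obtain ⟨δ₂, hδ₂⟩ := WithTop.ne_top_iff_exists.mp (wbar₂.ne_top' _ (X_sub_C_ne_zero α₂))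
  have hδ : δ₁ = δ₂ := eq_of_map_hasseDeriv_eq (W₁ := wbar₁.toAddValuation)
    (W₂ := wbar₂.toAddValuation) (fun m => by simp [F, hasseDeriv_map, h₁.1, h₂.1])
    (wbar₁.ne_top' F (ne_zero_of_mem_roots hα₁)) hδ₁.symm hα₁ (hδ₁ ▸ hmax₁) hδ₂.symm hα₂
    (hδ₂ ▸ hmax₂)
  rw [delta_eq_of_forall_le hα₁ hmax₁, delta_eq_of_forall_le hα₂ hmax₂, ← hδ₁, ← hδ₂, hδ]

/-- `δ(f)` does not depend on the choice of the common extension of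
`w` and `v̄` to `K̄(X)`. -/
theorem delta_independent_of_common_extension
    {K : Type*} [Field K] {Γ : Type*} [AddCommGroup Γ] [LinearOrder Γ] [IsOrderedAddMonoid Γ]
    {L : Type*} [Field L] [Algebra K L] [IsAlgClosure K L]
    (v : ValOn K Γ) (vbar : ValOn L Γ)
    (hvbar : ∀ c : K, vbar.toFun (algebraMap K L c) = v.toFun c)
    (w : ValOn (Polynomial K) Γ) (hext : Extends w v)
    (wbar₁ wbar₂ : ValOn (Polynomial L) Γ)
    (h₁ : IsCommonExt wbar₁ w vbar) (h₂ : IsCommonExt wbar₂ w vbar)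
    (f : Polynomial K) (hf : f ≠ 0) :
    delta wbar₁ f = delta wbar₂ f :=
  delta_independent_of_common_extension_general vbar w wbar₁ wbar₂ h₁ h₂ f

end MLV
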